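/- arXiv:1304.0874 — 2 statements merged into one kernel-verified Lean document; each statement's English description precedes it below -/
import Mathlib

section
/- Let f(X) = a_0 + a_1 X + ... + a_n X^n ∈ Z[X] with a_0 a_n ≠ 0. Suppose there exist two distinct primes p and q and a positive integer k such that: (i) p does not divide a_1, p divides a_i for all i > 1, and p^2 does not divide a_n; (ii) q does not divide a_0, q^k divides a_i for all i > 0, q^{k+1} does not divide a_n, and n does not divide k. Then f is irreducible over Q. -/
/-!
Modulo `p` the polynomial reduces to one of degree exactly `1`, and `p` divides its leading
coefficient exactly once; so in any factorisation over `ℤ` one factor has leading coefficient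
prime to `p`, hence degree at most `1`. By Gauss's lemma, applied to the primitive part, it remains
to exclude a linear factor `b X + a`, i.e. to show that `∑ aᵢ (-a)ⁱ bⁿ⁻ⁱ ≠ 0`. Here `q ∤ a`
because `a ∣ a₀`, and writing `b = q^β b'` with `q ∤ b'`, the `q`-adic valuations of the terms are
`nβ` for `i = 0`, `k` for `i = n`, and at least `k + β` otherwise. Unless `nβ = k`, which `n ∤ k`
forbids, a single term has the least valuation and the sum cannot vanish.
-/

open Polynomial Finset

theorem dvd_of_sum_eq_zero {R ι : Type*} [CommRing R] {s : Finset ι} {x : ι → R} {d : R}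
    {j : ι} (hj : j ∈ s) (hsum : ∑ i ∈ s, x i = 0) (hd : ∀ i ∈ s, i ≠ j → d ∣ x i) :
    d ∣ x j := by
  classical
  rw [← add_sum_erase s x hj, add_eq_zero_iff_eq_neg] at hsum
  rw [hsum, dvd_neg]
  exact dvd_sum fun i hi ↦ hd i (mem_of_mem_erase hi) (ne_of_mem_erase hi)

namespace Polynomial

theorem coeff_sum_range_C_mul_X_pow {R : Type*} [Semiring R] (a : ℕ → R) (n j : ℕ) :
    (∑ i ∈ range n, C (a i) * X ^ i).coeff j = if j < n then a j else 0 := by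
  simp [finsetSum_coeff]

theorem natDegree_sum_range_C_mul_X_pow {R : Type*} [Semiring R] (a : ℕ → R) {n : ℕ}
    (han : a n ≠ 0) : (∑ i ∈ range (n + 1), C (a i) * X ^ i).natDegree = n := by
  refine natDegree_eq_of_le_of_coeff_ne_zero (natDegree_le_iff_coeff_eq_zero.mpr fun i hi ↦ ?_) ?_
  · rw [coeff_sum_range_C_mul_X_pow, if_neg (by omega)]
  · rwa [coeff_sum_range_C_mul_X_pow, if_pos n.lt_succ_self]

theorem natDegree_le_natDegree_map_of_dvd {R S : Type*} [CommRing R] [CommRing S] [IsDomain S]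
    (φ : R →+* S) {f v : R[X]} (hvf : v ∣ f) (hf : f.map φ ≠ 0) (hv : φ v.leadingCoeff ≠ 0) :
    v.natDegree ≤ (f.map φ).natDegree := by
  rw [← natDegree_map_of_leadingCoeff_ne_zero φ hv]
  exact natDegree_le_of_dvd (Polynomial.map_dvd φ hvf) hf

variable {R : Type*} [CommRing R]

theorem natDegree_le_one_of_dvd {p : R} (hp : Prime p) {f v : R[X]} (h1 : ¬ p ∣ f.coeff 1)
    (hi : ∀ i, 1 < i → p ∣ f.coeff i) (hvf : v ∣ f) (hv : ¬ p ∣ v.leadingCoeff) :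
    v.natDegree ≤ 1 := by
  have : (Ideal.span {p}).IsPrime := (Ideal.span_singleton_prime hp.ne_zero).mpr hp
  set φ := Ideal.Quotient.mk (Ideal.span {p})
  have hφ : ∀ r, φ r = 0 ↔ p ∣ r := Ideal.Quotient.eq_zero_iff_dvd p
  have hf1 : (f.map φ).coeff 1 ≠ 0 := by rwa [coeff_map, Ne, hφ]
  have hdeg : (f.map φ).natDegree ≤ 1 :=
    natDegree_le_iff_coeff_eq_zero.mpr fun i hi' ↦ by
      rw [coeff_map, hφ]; exact hi i (by exact_mod_cast hi')
  calc v.natDegree ≤ (f.map φ).natDegree :=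
        natDegree_le_natDegree_map_of_dvd φ hvf (fun h ↦ hf1 (by rw [h, coeff_zero]))
          (by rwa [Ne, hφ])
    _ ≤ 1 := hdeg

variable [IsDomain R]

theorem natDegree_le_one_or_of_mul_dvd {p : R} (hp : Prime p) {f u v : R[X]}
    (h1 : ¬ p ∣ f.coeff 1) (hi : ∀ i, 1 < i → p ∣ f.coeff i) (hlead : ¬ p ^ 2 ∣ f.leadingCoeff)
    (huvf : u * v ∣ f) : u.natDegree ≤ 1 ∨ v.natDegree ≤ 1 := by
  by_cases hu : p ∣ u.leadingCoeff
  · refine .inr (natDegree_le_one_of_dvd hp h1 hi (dvd_of_mul_left_dvd huvf) fun hv ↦ hlead ?_)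
    rw [sq]
    exact (mul_dvd_mul hu hv).trans (leadingCoeff_mul u v ▸ leadingCoeff_dvd_leadingCoeff huvf)
  · exact .inl (natDegree_le_one_of_dvd hp h1 hi (dvd_of_mul_right_dvd huvf) hu)

theorem eval_neg_scaleRoots_eq_zero_of_dvd {a b : R} (hb : b ≠ 0) {f : R[X]}
    (h : C b * X + C a ∣ f) : (f.scaleRoots b).eval (-a) = 0 := by
  -- `(C b * X + C a).scaleRoots b = C b * (X + C a)`
  have hlin : ((C b * X + C a).scaleRoots b).eval (-a) = 0 := by
    rw [eval_eq_sum_range, natDegree_scaleRoots, natDegree_linear hb]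
    simp [coeff_scaleRoots, natDegree_linear hb, sum_range_succ]
    ring
  exact zero_dvd_iff.mp (hlin ▸ eval_dvd (scaleRoots_dvd _ _ h))

theorem IsPrimitive.irreducible_of_natDegree_le_one_or {g : R[X]} (hg : g.IsPrimitive)
    (hdeg : g.natDegree ≠ 0) (hfactor : ∀ u v, u * v ∣ g → u.natDegree ≤ 1 ∨ v.natDegree ≤ 1)
    (hlin : ∀ v, v ∣ g → v.natDegree ≠ 1) : Irreducible g := by
  have hpos : ∀ v, v ∣ g → ¬ IsUnit v → v.natDegree ≠ 0 := fun v hvg hv h0 ↦ by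
    rw [eq_C_of_natDegree_eq_zero h0, isUnit_C] at hv
    exact hv (hg _ (eq_C_of_natDegree_eq_zero h0 ▸ hvg))
  refine ⟨fun hu ↦ hdeg (natDegree_eq_zero_of_isUnit hu), fun u v huv ↦ ?_⟩
  by_contra! h
  have hu := hlin u (huv ▸ dvd_mul_right u v)
  have hv := hlin v (huv ▸ dvd_mul_left v u)
  have hu0 := hpos u (huv ▸ dvd_mul_right u v) h.1
  have hv0 := hpos v (huv ▸ dvd_mul_left v u) h.2
  rcases hfactor u v huv.symm.dvd with h | h <;> omega

theorem eval_scaleRoots_ne_zero [WfDvdMonoid R] {q : R} (hq : Prime q) {k : ℕ} {f : R[X]}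
    (h0 : ¬ q ∣ f.coeff 0) (hi : ∀ i, 0 < i → q ^ k ∣ f.coeff i)
    (hlead : ¬ q ^ (k + 1) ∣ f.leadingCoeff) (hnk : ¬ f.natDegree ∣ k) {s t : R}
    (hs : ¬ q ∣ s) (ht : t ≠ 0) : (f.scaleRoots t).eval s ≠ 0 := by
  set n := f.natDegree
  intro h
  rw [eval_eq_sum_range, natDegree_scaleRoots] at h
  simp only [coeff_scaleRoots] at h
  obtain ⟨β, t', ht', rfl⟩ := WfDvdMonoid.max_power_factor ht hq.irreducible
  have hpow : ∀ m, (q ^ β * t') ^ m = q ^ (m * β) * t' ^ m := fun m ↦ by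
    rw [mul_pow, ← pow_mul, mul_comm β]
  rcases lt_trichotomy (n * β) k with hlt | heq | hgt
  · have h0' := dvd_of_sum_eq_zero (d := q ^ (n * β + 1)) (mem_range.mpr n.succ_pos) h
      fun i _ hi0 ↦
        (((pow_dvd_pow q hlt).trans (hi i (Nat.pos_of_ne_zero hi0))).mul_right _).mul_right _
    rw [Nat.sub_zero, pow_zero, mul_one, hpow, mul_left_comm, pow_succ,
      mul_dvd_mul_iff_left (pow_ne_zero _ hq.ne_zero)] at h0'
    rcases hq.dvd_or_dvd h0' with h | h
    · exact h0 h
    · exact ht' (hq.dvd_of_dvd_pow h)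
  · exact hnk ⟨β, heq.symm⟩
  · have hβ : β ≠ 0 := by rintro rfl; simp at hgt
    have hn' := dvd_of_sum_eq_zero (d := q ^ (k + 1)) (self_mem_range_succ n) h fun i hmem hin ↦ by
      have hin : i < n := lt_of_le_of_ne (Nat.lt_succ_iff.mp (mem_range.mp hmem)) hin
      rcases Nat.eq_zero_or_pos i with rfl | hi0
      · rw [Nat.sub_zero, hpow]
        exact (dvd_mul_of_dvd_left (pow_dvd_pow q hgt) _).mul_left _ |>.mul_right _
      · rw [pow_succ]
        refine (mul_dvd_mul (hi i hi0) ?_).mul_right _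
        exact dvd_pow (dvd_mul_of_dvd_left (dvd_pow_self q hβ) _) (Nat.sub_ne_zero_of_lt hin)
    rw [Nat.sub_self, pow_zero, mul_one] at hn'
    exact hlead (hq.pow_dvd_of_dvd_mul_right _ (fun h ↦ hs (hq.dvd_of_dvd_pow h)) hn')

theorem natDegree_ne_one_of_dvd [WfDvdMonoid R] {q : R} (hq : Prime q) {k : ℕ} {f v : R[X]}
    (h0 : ¬ q ∣ f.coeff 0) (hi : ∀ i, 0 < i → q ^ k ∣ f.coeff i)
    (hlead : ¬ q ^ (k + 1) ∣ f.leadingCoeff) (hnk : ¬ f.natDegree ∣ k) (hvf : v ∣ f) :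
    v.natDegree ≠ 1 := by
  intro hv
  have hb : v.coeff 1 ≠ 0 := by
    rw [← hv]
    exact leadingCoeff_ne_zero.mpr (by rintro rfl; simp at hv)
  have ha : ¬ q ∣ -v.coeff 0 := fun h ↦
    h0 ((dvd_neg.mp h).trans (by simpa only [coeff_zero_eq_eval_zero] using eval_dvd hvf))
  rw [eq_X_add_C_of_natDegree_le_one hv.le] at hvf
  exact eval_scaleRoots_ne_zero hq h0 hi hlead hnk ha hb (eval_neg_scaleRoots_eq_zero_of_dvd hb hvf)

theorem irreducible_map_intCast_of_prime_of_prime (f : ℤ[X]) {p q : ℤ} (hp : Prime p)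
    (hq : Prime q) {k : ℕ} (hp1 : ¬ p ∣ f.coeff 1) (hp2 : ∀ i, 1 < i → p ∣ f.coeff i)
    (hp3 : ¬ p ^ 2 ∣ f.leadingCoeff) (hq1 : ¬ q ∣ f.coeff 0) (hq2 : ∀ i, 0 < i → q ^ k ∣ f.coeff i)
    (hq3 : ¬ q ^ (k + 1) ∣ f.leadingCoeff) (hnk : ¬ f.natDegree ∣ k) :
    Irreducible (f.map (Int.castRingHom ℚ)) := by
  have hf1 : f.coeff 1 ≠ 0 := fun h ↦ hp1 (h ▸ dvd_zero p)
  have hprim := isPrimitive_primPart f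
  have hirr : Irreducible f.primPart :=
    hprim.irreducible_of_natDegree_le_one_or
      (by rw [natDegree_primPart]; have := le_natDegree_of_ne_zero hf1; omega)
      (fun u v h ↦ natDegree_le_one_or_of_mul_dvd hp hp1 hp2 hp3 (h.trans (primPart_dvd f)))
      (fun v h ↦ natDegree_ne_one_of_dvd hq hq1 hq2 hq3 hnk (h.trans (primPart_dvd f)))
  have hf0 : f ≠ 0 := by rintro rfl; simp at hf1
  have hc : IsUnit (C (f.content : ℚ)) :=
    isUnit_C.mpr (Int.cast_ne_zero.mpr (content_eq_zero_iff.not.mpr hf0)).isUnit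
  rw [eq_C_content_mul_primPart f, Polynomial.map_mul, map_C, eq_intCast,
    irreducible_isUnit_mul hc]
  exact (IsPrimitive.Int.irreducible_iff_irreducible_map_cast hprim).mp hirr

end Polynomial

theorem corollary_1_8_general (n : ℕ) (hn : 2 ≤ n) (a : ℕ → ℤ)
    (han : a n ≠ 0)
    (p q : ℕ) (hp : p.Prime) (hq : q.Prime)
    (k : ℕ)
    (hp1 : ¬ (p : ℤ) ∣ a 1)
    (hp2 : ∀ i, 1 < i → i ≤ n → (p : ℤ) ∣ a i)
    (hp3 : ¬ (p : ℤ)^2 ∣ a n)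
    (hq1 : ¬ (q : ℤ) ∣ a 0)
    (hq2 : ∀ i, 0 < i → i ≤ n → (q : ℤ)^k ∣ a i)
    (hq3 : ¬ (q : ℤ)^(k+1) ∣ a n)
    (hnk : ¬ n ∣ k) :
    Irreducible ((∑ i ∈ range (n+1), C (a i) * X ^ i).map (Int.castRingHom ℚ)) := by
  set f := ∑ i ∈ range (n + 1), C (a i) * X ^ i
  have hcoeff : ∀ i ≤ n, f.coeff i = a i := fun i hi ↦ by
    rw [coeff_sum_range_C_mul_X_pow, if_pos (Nat.lt_succ_of_le hi)]
  have hdeg : f.natDegree = n := natDegree_sum_range_C_mul_X_pow a han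
  have hlead : f.leadingCoeff = a n := by rw [leadingCoeff, hdeg, hcoeff n le_rfl]
  have hcoeff_dvd : ∀ (d : ℤ) (P : ℕ → Prop), (∀ i, P i → i ≤ n → d ∣ a i) →
      ∀ i, P i → d ∣ f.coeff i := fun d P h i hi ↦ by
    rcases le_or_gt i n with hin | hin
    · exact hcoeff i hin ▸ h i hi hin
    · exact coeff_eq_zero_of_natDegree_lt (hdeg ▸ hin) ▸ dvd_zero d
  exact f.irreducible_map_intCast_of_prime_of_prime (Nat.prime_iff_prime_int.mp hp)
    (Nat.prime_iff_prime_int.mp hq) (hcoeff 1 (by omega) ▸ hp1) (hcoeff_dvd _ _ hp2)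
    (hlead ▸ hp3) (hcoeff 0 n.zero_le ▸ hq1) (hcoeff_dvd _ _ hq2) (hlead ▸ hq3) (hdeg ▸ hnk)

theorem corollary_1_8 (n : ℕ) (hn : 2 ≤ n) (a : ℕ → ℤ)
    (ha0 : a 0 ≠ 0) (han : a n ≠ 0)
    (p q : ℕ) (hp : p.Prime) (hq : q.Prime) (hpq : p ≠ q)
    (k : ℕ) (hk : 0 < k)
    (hp1 : ¬ (p : ℤ) ∣ a 1)
    (hp2 : ∀ i, 1 < i → i ≤ n → (p : ℤ) ∣ a i)
    (hp3 : ¬ (p : ℤ)^2 ∣ a n)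
    (hq1 : ¬ (q : ℤ) ∣ a 0)
    (hq2 : ∀ i, 0 < i → i ≤ n → (q : ℤ)^k ∣ a i)
    (hq3 : ¬ (q : ℤ)^(k+1) ∣ a n)
    (hnk : ¬ n ∣ k) :
    Irreducible ((∑ i ∈ range (n+1), C (a i) * X ^ i).map (Int.castRingHom ℚ)) :=
  corollary_1_8_general n hn a han p q hp hq k hp1 hp2 hp3 hq1 hq2 hq3 hnk
end

section
/- For distinct primes p and q and n = 6, the polynomial f(X) = q^3 + p^2 q^3 X + p^2 q^3 X^2 + p^2 q^3 X^3 + p^2 q^3 X^4 + p^2 q^3 X^5 + p^2 X^6 is irreducible over Q. -/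
/-!
Newton polygons. With respect to `q` the coefficient valuations are `3, 3, 3, 3, 3, 3, 0`, so the
Newton polygon of `f` is the single segment from `(0, 3)` to `(6, 0)`; with respect to `p` they are
`0, 2, 2, 2, 2, 2, 2` and the polygon is the single segment from `(0, 0)` to `(6, 2)`. A factor of
a polynomial whose Newton polygon is one segment has a one-segment polygon of the same slope,
which must end at a lattice point: its degree `d` satisfies `d / 2 ∈ ℤ` and `d / 3 ∈ ℤ`, so
`d ∈ {0, 6}`. Slopes are handled through the Gauss norm `max |aᵢ| cⁱ`, which is multiplicative.
-/

open Polynomial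

namespace Polynomial

variable {R : Type*} [Ring R] {v : AbsoluteValue R ℝ} {c : ℝ}

/-- `f` is pure: its Newton polygon (the lower hull of the points `(i, -log v(aᵢ))`) is a single
segment, of slope `log c`; equivalently the Gauss norm `max v(aᵢ) cⁱ` is attained at both ends. -/
def IsPure (v : AbsoluteValue R ℝ) (c : ℝ) (f : R[X]) : Prop :=
  f.gaussNorm v c = v (f.coeff 0) ∧ f.gaussNorm v c = v f.leadingCoeff * c ^ f.natDegree

theorem le_gaussNorm_coeff_zero (hc : 0 ≤ c) (f : R[X]) : v (f.coeff 0) ≤ f.gaussNorm v c := by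
  simpa using f.le_gaussNorm v hc 0

theorem le_gaussNorm_leadingCoeff (hc : 0 ≤ c) (f : R[X]) :
    v f.leadingCoeff * c ^ f.natDegree ≤ f.gaussNorm v c :=
  f.le_gaussNorm v hc f.natDegree

theorem isPure_of_forall_le (hc : 0 ≤ c) {f : R[X]}
    (hle : ∀ i, v (f.coeff i) * c ^ i ≤ v (f.coeff 0))
    (hends : v (f.coeff 0) = v f.leadingCoeff * c ^ f.natDegree) : IsPure v c f := by
  obtain ⟨i, hi⟩ := f.exists_eq_gaussNorm v c
  have h : f.gaussNorm v c = v (f.coeff 0) :=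
    le_antisymm (hi ▸ hle i) (le_gaussNorm_coeff_zero hc f)
  exact ⟨h, h.trans hends⟩

theorem IsPure.of_dvd [NoZeroDivisors R] (hna : IsNonarchimedean v) (hc : 0 < c) {f g : R[X]}
    (hf : IsPure v c f) (hf0 : f.coeff 0 ≠ 0) (hgf : g ∣ f) : IsPure v c g := by
  obtain ⟨h, rfl⟩ := hgf
  obtain ⟨hg0, hh0⟩ := mul_ne_zero_iff.mp (mul_coeff_zero g h ▸ hf0)
  have hg : g ≠ 0 := fun hg => hg0 (by simp [hg])
  have hh : h ≠ 0 := fun hh => hh0 (by simp [hh])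
  have hpos : 0 < g.gaussNorm v c :=
    (mul_pos (v.pos (leadingCoeff_ne_zero.mpr hg)) (pow_pos hc _)).trans_le
      (le_gaussNorm_leadingCoeff hc.le g)
  -- As `‖g h‖ = ‖g‖ ‖h‖`, lower bounds for `‖g‖`, `‖h‖` with product `‖g h‖` are attained.
  have attained {a b : ℝ} (ha : a ≤ g.gaussNorm v c) (hb : b ≤ h.gaussNorm v c) (hb0 : 0 < b)
      (hab : (g * h).gaussNorm v c = a * b) : g.gaussNorm v c = a :=
    ((mul_eq_mul_iff_eq_and_eq_of_pos' ha hb hpos hb0).mp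
      (hab.symm.trans (gaussNorm_mul hna hc g h))).1.symm
  constructor
  · exact attained (le_gaussNorm_coeff_zero hc.le g) (le_gaussNorm_coeff_zero hc.le h)
      (v.pos hh0) (by rw [hf.1, mul_coeff_zero, map_mul])
  · refine attained (le_gaussNorm_leadingCoeff hc.le g) (le_gaussNorm_leadingCoeff hc.le h)
      (mul_pos (v.pos (leadingCoeff_ne_zero.mpr hh)) (pow_pos hc _)) ?_
    rw [hf.2, leadingCoeff_mul, natDegree_mul hg hh, map_mul, pow_add]
    ring

end Polynomial

namespace Rat.AbsoluteValue

variable {ℓ : ℕ} [Fact ℓ.Prime]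

theorem padic_eq_zpow {x : ℚ} (hx : x ≠ 0) : padic ℓ x = (ℓ : ℝ) ^ (-padicValRat ℓ x) := by
  simp [padicNorm.eq_zpow_of_nonzero hx]

variable (ℓ) in
theorem isNonarchimedean_padic : IsNonarchimedean (padic ℓ) := fun x y => by
  simpa using (Rat.cast_le (K := ℝ)).mpr (padicNorm.nonarchimedean (p := ℓ) (q := x) (r := y))

end Rat.AbsoluteValue

namespace Polynomial.IsPure

open Rat.AbsoluteValue

variable {ℓ : ℕ} [Fact ℓ.Prime] {c : ℝ} {k : ℕ} {j : ℤ} {f : ℚ[X]}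

/-- The endpoints of the Newton polygon are lattice points: `c ^ deg f` is a power of `ℓ`. -/
theorem dvd_mul_natDegree (hck : c ^ k = (ℓ : ℝ) ^ j) (hf : IsPure (padic ℓ) c f)
    (hf0 : f.coeff 0 ≠ 0) : (k : ℤ) ∣ j * f.natDegree := by
  have hf' : f ≠ 0 := fun h => hf0 (by simp [h])
  have hℓ : (1 : ℝ) < ℓ := by exact_mod_cast (Fact.out : ℓ.Prime).one_lt
  have hℓ0 : (ℓ : ℝ) ≠ 0 := by positivity
  have hends := hf.1.symm.trans hf.2
  rw [padic_eq_zpow hf0, padic_eq_zpow (leadingCoeff_ne_zero.mpr hf')] at hends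
  set a := padicValRat ℓ (f.coeff 0)
  set b := padicValRat ℓ f.leadingCoeff
  have hcn : c ^ f.natDegree = (ℓ : ℝ) ^ (b - a) := by
    rw [sub_eq_add_neg, zpow_add₀ hℓ0, hends, ← mul_assoc, ← zpow_add₀ hℓ0, add_neg_cancel,
      zpow_zero, one_mul]
  have hpow : (ℓ : ℝ) ^ (j * f.natDegree) = (ℓ : ℝ) ^ ((b - a) * k) := by
    rw [zpow_mul, ← hck, zpow_mul, ← hcn, zpow_natCast, zpow_natCast, ← pow_mul, ← pow_mul,
      mul_comm]
  exact ⟨b - a, by rw [zpow_right_injective₀ (by positivity) hℓ.ne' hpow, mul_comm]⟩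

theorem dvd_mul_natDegree_of_dvd (hc : 0 < c) (hck : c ^ k = (ℓ : ℝ) ^ j)
    (hf : IsPure (padic ℓ) c f) (hf0 : f.coeff 0 ≠ 0) {g : ℚ[X]} (hgf : g ∣ f) :
    (k : ℤ) ∣ j * g.natDegree := by
  refine (hf.of_dvd (isNonarchimedean_padic ℓ) hc hf0 hgf).dvd_mul_natDegree hck ?_
  obtain ⟨h, rfl⟩ := hgf
  exact left_ne_zero_of_mul (mul_coeff_zero g h ▸ hf0)

end Polynomial.IsPure

theorem Real.exists_pos_pow_eq {x : ℝ} (hx : 0 < x) {n : ℕ} (hn : n ≠ 0) :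
    ∃ c : ℝ, 0 < c ∧ c ^ n = x :=
  ⟨_, Real.rpow_pos_of_pos hx _, Real.rpow_inv_natCast_pow hx.le hn⟩

noncomputable def sextic {R : Type*} [Semiring R] (a b d : R) : R[X] :=
  C a + C b * X + C b * X ^ 2 + C b * X ^ 3 + C b * X ^ 4 + C b * X ^ 5 + C d * X ^ 6

section Sextic

variable {R : Type*} [Semiring R] (a b d : R)

theorem coeff_sextic (i : ℕ) :
    (sextic a b d).coeff i = if i = 0 then a else if i ≤ 5 then b else if i = 6 then d else 0 := by
  simp only [sextic, coeff_add, coeff_C_mul, coeff_X_pow, coeff_C, coeff_X]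
  split_ifs <;> first | omega | simp

theorem natDegree_sextic (hd : d ≠ 0) : (sextic a b d).natDegree = 6 := by
  unfold sextic; compute_degree!

theorem leadingCoeff_sextic (hd : d ≠ 0) : (sextic a b d).leadingCoeff = d := by
  rw [leadingCoeff, natDegree_sextic a b d hd, coeff_sextic]; rfl

theorem map_sextic {S : Type*} [Semiring S] (φ : R →+* S) :
    (sextic a b d).map φ = sextic (φ a) (φ b) (φ d) := by
  simp [sextic, Polynomial.map_add, Polynomial.map_mul]

end Sextic

theorem isPure_sextic {R : Type*} [Ring R] {v : AbsoluteValue R ℝ} {c : ℝ} {a b d : R}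
    (hc : 0 ≤ c) (hd : d ≠ 0) (hb : ∀ i, 1 ≤ i → i ≤ 5 → v b * c ^ i ≤ v a)
    (hends : v a = v d * c ^ 6) : IsPure v c (sextic a b d) := by
  have hcoeff0 : (sextic a b d).coeff 0 = a := by simp [coeff_sextic]
  refine isPure_of_forall_le hc (fun i => ?_) ?_
  · rw [hcoeff0, coeff_sextic]
    split_ifs with h0 h5 h6
    · simp [h0]
    · exact hb i (by omega) h5
    · rw [h6, hends]
    · simp
  · rw [hcoeff0, leadingCoeff_sextic a b d hd, natDegree_sextic a b d hd, hends]

section Padic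

open Rat.AbsoluteValue

variable {p q : ℕ} [Fact p.Prime] [Fact q.Prime]

theorem isPure_padic_q_sextic (hpq : p ≠ q) {c : ℝ} (hc : 0 < c) (hc2 : c ^ 2 = (q : ℝ)⁻¹) :
    IsPure (padic q) c (sextic ((q : ℚ) ^ 3) ((p : ℚ) ^ 2 * (q : ℚ) ^ 3) ((p : ℚ) ^ 2)) := by
  have hvp : padic q p = 1 := by simp [padicNorm.padicNorm_of_prime_of_ne hpq.symm]
  have hvq : padic q q = (q : ℝ)⁻¹ := by simp [padicNorm.padicNorm_p_of_prime]
  have hc1 : c ≤ 1 := by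
    refine (pow_le_one_iff_of_nonneg hc.le two_ne_zero).mp (hc2 ▸ inv_le_one_of_one_le₀ ?_)
    exact_mod_cast (Fact.out : q.Prime).one_le
  refine isPure_sextic hc.le (by simp [(Fact.out : p.Prime).ne_zero]) (fun i _ _ => ?_) ?_
  · simp only [map_mul, map_pow, hvp, one_pow, one_mul]
    exact mul_le_of_le_one_right (by positivity) (pow_le_one₀ hc.le hc1)
  · simp only [map_pow, hvp, hvq, one_pow, one_mul, show c ^ 6 = (c ^ 2) ^ 3 by ring, hc2]

theorem isPure_padic_p_sextic (hpq : p ≠ q) {c : ℝ} (hc : 0 < c) (hc3 : c ^ 3 = p) :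
    IsPure (padic p) c (sextic ((q : ℚ) ^ 3) ((p : ℚ) ^ 2 * (q : ℚ) ^ 3) ((p : ℚ) ^ 2)) := by
  have hvp : padic p p = (p : ℝ)⁻¹ := by simp [padicNorm.padicNorm_p_of_prime]
  have hvq : padic p q = 1 := by simp [padicNorm.padicNorm_of_prime_of_ne hpq]
  have hp0 : (p : ℝ) ≠ 0 := by exact_mod_cast (Fact.out : p.Prime).ne_zero
  have hc1 : 1 ≤ c := by
    refine (one_le_pow_iff_of_nonneg hc.le three_ne_zero).mp (hc3 ▸ ?_)
    exact_mod_cast (Fact.out : p.Prime).one_le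
  have hends : padic p ((p : ℚ) ^ 2) * c ^ 6 = 1 := by
    rw [map_pow, hvp, show c ^ 6 = (c ^ 3) ^ 2 by ring, hc3, inv_pow,
      inv_mul_cancel₀ (pow_ne_zero 2 hp0)]
  refine isPure_sextic hc.le (by simpa using hp0) (fun i _ hi => ?_) ?_
  · rw [map_pow, hvq, one_pow, ← hends, map_mul, map_pow (padic p) (q : ℚ), hvq, one_pow, mul_one]
    gcongr
    omega
  · rw [hends, map_pow, hvq, one_pow]

end Padic

theorem example_1 (p q : ℕ) (hp : p.Prime) (hq : q.Prime) (hpq : p ≠ q) :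
    Irreducible (((C ((q:ℤ)^3) + C ((p:ℤ)^2 * (q:ℤ)^3) * X + C ((p:ℤ)^2 * (q:ℤ)^3) * X^2 +
      C ((p:ℤ)^2 * (q:ℤ)^3) * X^3 + C ((p:ℤ)^2 * (q:ℤ)^3) * X^4 +
      C ((p:ℤ)^2 * (q:ℤ)^3) * X^5 + C ((p:ℤ)^2) * X^6)).map (Int.castRingHom ℚ)) := by
  have := Fact.mk hp
  have := Fact.mk hq
  rw [← sextic, map_sextic]
  simp only [eq_intCast, Int.cast_pow, Int.cast_mul, Int.cast_natCast]
  set f := sextic ((q : ℚ) ^ 3) ((p : ℚ) ^ 2 * (q : ℚ) ^ 3) ((p : ℚ) ^ 2)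
  have hf0 : f.coeff 0 ≠ 0 := by simp [f, coeff_sextic, hq.ne_zero]
  have hdeg : f.natDegree = 6 := natDegree_sextic _ _ _ (by simp [hp.ne_zero])
  obtain ⟨cq, hcq, hcq2⟩ :=
    Real.exists_pos_pow_eq (x := (q : ℝ)⁻¹) (by simpa using hq.pos) two_ne_zero
  obtain ⟨cp, hcp, hcp3⟩ := Real.exists_pos_pow_eq (x := p) (by simpa using hp.pos) three_ne_zero
  refine (irreducible_iff_lt_natDegree_lt (fun h => hf0 (by simp [h]))
    (not_isUnit_of_natDegree_pos _ (by omega))).mpr fun g _ hg hgf => ?_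
  have h2 : (2 : ℤ) ∣ -1 * g.natDegree := (isPure_padic_q_sextic hpq hcq hcq2)
    |>.dvd_mul_natDegree_of_dvd hcq (by rw [hcq2, zpow_neg_one]) hf0 hgf
  have h3 : (3 : ℤ) ∣ 1 * g.natDegree := (isPure_padic_p_sextic hpq hcp hcp3)
    |>.dvd_mul_natDegree_of_dvd hcp (by rw [hcp3, zpow_one]) hf0 hgf
  rw [hdeg, Finset.mem_Ioc] at hg
  omega
end
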